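/- arXiv:1612.02845 — 2 statements merged into one kernel-verified Lean document; each statement's English description precedes it below -/
import Mathlib

section
/- Let C = C(0,d) be a ramified Cartan subgroup of GL₂(ℤ_ℓ), i.e. d ∈ ℤ_ℓ is nonzero and ℓ divides d if ℓ is odd. Let G be an open subgroup of C and let n₀ ≥ 1 be an integer such that every M ∈ C with M ≡ I (mod ℓ^{n₀}) belongs to G. Then for all integers a, b ≥ 0, all n ≥ n₀, and all M₁, M₂ ∈ 𝓜_{a,b}(G)(n), the number of elements of 𝓜_{a,b}(G)(n+1) reducing to M₁ modulo ℓⁿ equals the number of elements of 𝓜_{a,b}(G)(n+1) reducing to M₂ modulo ℓⁿ. -/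
open Matrix Polynomial

/-- Reduction modulo `p^n` on `GL₂(ℤ_p)`. -/
noncomputable def redGL (p : ℕ) [Fact p.Prime] (n : ℕ) :
    GL (Fin 2) ℤ_[p] →* GL (Fin 2) (ZMod (p ^ n)) :=
  Matrix.GeneralLinearGroup.map (PadicInt.toZModPow n)

/-- `M ≡ I (mod p^k)`. -/
def modI {p : ℕ} [Fact p.Prime] (k : ℕ) (M : GL (Fin 2) ℤ_[p]) : Prop :=
  ∀ i j, ((p : ℤ_[p]) ^ k) ∣ (((M : Matrix (Fin 2) (Fin 2) ℤ_[p]) - 1) i j)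

/-- `v_p x = k`, expressed through divisibility (in particular `x ≠ 0`). -/
def valEq {p : ℕ} [Fact p.Prime] (x : ℤ_[p]) (k : ℕ) : Prop :=
  ((p : ℤ_[p]) ^ k ∣ x) ∧ ¬ ((p : ℤ_[p]) ^ (k + 1) ∣ x)

/-- Condition `E(a,b)`. -/
def CondE {p : ℕ} [Fact p.Prime] (a b : ℕ) (M : GL (Fin 2) ℤ_[p]) : Prop :=
  modI a M ∧ ¬ modI (a + 1) M ∧
    valEq (((M : Matrix (Fin 2) (Fin 2) ℤ_[p]) - 1).det) (2 * a + b)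

/-- `𝓜_{a,b}(G)`. -/
def Mset {p : ℕ} [Fact p.Prime] (G : Subgroup (GL (Fin 2) ℤ_[p])) (a b : ℕ) :
    Set (GL (Fin 2) ℤ_[p]) :=
  {M | M ∈ G ∧ CondE a b M}

/-- `μ_{a,b}(G)`. -/
noncomputable def mu (p : ℕ) [Fact p.Prime] (G : Subgroup (GL (Fin 2) ℤ_[p])) (a b : ℕ) : ℚ :=
  ((redGL p (a + b + 1) '' Mset G a b).ncard : ℚ) /
    ((redGL p (a + b + 1) '' (G : Set (GL (Fin 2) ℤ_[p]))).ncard : ℚ)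

/-- `G` is open in `GL₂(ℤ_p)`. -/
def IsOpenSub {p : ℕ} [Fact p.Prime] (G : Subgroup (GL (Fin 2) ℤ_[p])) : Prop :=
  ∃ m : ℕ, 1 ≤ m ∧ ∀ M : GL (Fin 2) ℤ_[p], modI m M → M ∈ G

/-- The underlying set of the Cartan subgroup `C(c,d)`. -/
def CartanSet {p : ℕ} [Fact p.Prime] (c d : ℤ_[p]) : Set (GL (Fin 2) ℤ_[p]) :=
  {M | ∃ x y : ℤ_[p], (M : Matrix (Fin 2) (Fin 2) ℤ_[p]) = !![x, d * y; y, x + c * y]}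

/-- `C` is the Cartan subgroup with parameters `(c,d)`. -/
def IsCartan {p : ℕ} [Fact p.Prime] (c d : ℤ_[p]) (C : Subgroup (GL (Fin 2) ℤ_[p])) : Prop :=
  (C : Set (GL (Fin 2) ℤ_[p])) = CartanSet c d

/-- `(c,d)` are normalized parameters. -/
def NormalizedParams (p : ℕ) [Fact p.Prime] (c d : ℤ_[p]) : Prop :=
  (c = 0 ∧ d ≠ 0) ∨ (p = 2 ∧ c = 1 ∧ (d = 0 ∨ IsUnit d))

/-- `(c,d)` are parameters of a split Cartan subgroup. -/
def SplitParams (p : ℕ) [Fact p.Prime] (c d : ℤ_[p]) : Prop :=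
  (Odd p ∧ c = 0 ∧ ∃ u : ℤ_[p], IsUnit u ∧ d = u ^ 2) ∨ (p = 2 ∧ c = 1 ∧ d = 0)

/-- `(c,d)` are parameters of a nonsplit Cartan subgroup. -/
def NonsplitParams (p : ℕ) [Fact p.Prime] (c d : ℤ_[p]) : Prop :=
  (Odd p ∧ c = 0 ∧ IsUnit d ∧ ¬ IsSquare d) ∨ (p = 2 ∧ c = 1 ∧ IsUnit d)

/-- Reduction `GL₂(ℤ/p^{n+1}) → GL₂(ℤ/p^n)`. -/
noncomputable def castGL (p : ℕ) [Fact p.Prime] (n : ℕ) :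
    GL (Fin 2) (ZMod (p ^ (n + 1))) →* GL (Fin 2) (ZMod (p ^ n)) :=
  Matrix.GeneralLinearGroup.map (ZMod.castHom (pow_dvd_pow p (Nat.le_succ n)) (ZMod (p ^ n)))

/-!
An element of `C(0,d)` is `[[x, d y], [y, x]]`; it satisfies `E(a,b)` iff `x = 1 + p^a X`,
`y = p^a Y` with `(X, Y)` primitive and `v(X² - d Y²) = b`. For `n = a + k > a` its lifts modulo
`p^(n+1)` are the `(X + p^k s, Y + p^k t)`, and since `n ≥ n₀` they all lie in `G`; so the count is
that of the residues `(s, t) mod p` keeping `v(X² - d Y²) = b`. For `b = 0` every pair works.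
For `b > 0`, `Y` is a unit, and dividing by `Y` reduces to counting the `u mod p` with
`v((z + p^k u)² - d) = b`, where `z = X / Y`. This does not depend on `z`: either `z₁ ≡ ±z₂`
modulo `p^k`, and `u ↦ ±u + c` matches the two sets, or `v(z₁ - z₂) + v(z₁ + z₂) ≥ b` forces
`v(2 zᵢ) ≥ b + 1 - k` with `b + 1 < 2k`, and then every `u` works. For `n ≤ a` both matrices are
the identity.
-/

theorem Set.ncard_image_eq_ncard_image_of_iff {α β γ : Type*} {f : α → β} {g : α → γ}
    {T : Set α} (h : ∀ a ∈ T, ∀ a' ∈ T, f a = f a' ↔ g a = g a') :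
    (f '' T).ncard = (g '' T).ncard := by
  refine ncard_congr (fun y hy => g hy.choose) (fun y hy => mem_image_of_mem g hy.choose_spec.1)
    (fun y y' hy hy' hyy' => ?_) ?_
  · rw [← hy.choose_spec.2, ← hy'.choose_spec.2]
    exact (h _ hy.choose_spec.1 _ hy'.choose_spec.1).2 hyy'
  · rintro _ ⟨a, ha, rfl⟩
    have hfa : f a ∈ f '' T := mem_image_of_mem f ha
    exact ⟨f a, hfa, (h _ hfa.choose_spec.1 _ ha).1 hfa.choose_spec.2⟩

section CartanMat

variable {R : Type*} [CommRing R]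

def cartanMat (d x y : R) : Matrix (Fin 2) (Fin 2) R := !![x, d * y; y, x]

theorem cartanMat_sub (d x y x' y' : R) :
    cartanMat d x y - cartanMat d x' y' = cartanMat d (x - x') (y - y') := by
  ext i j; fin_cases i <;> fin_cases j <;> simp [cartanMat, mul_sub]

theorem cartanMat_sub_one (d x y : R) : cartanMat d x y - 1 = cartanMat d (x - 1) y := by
  ext i j; fin_cases i <;> fin_cases j <;> simp [cartanMat]

theorem det_cartanMat (d x y : R) : (cartanMat d x y).det = x ^ 2 - d * y ^ 2 := by
  simp [cartanMat, Matrix.det_fin_two]; ring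

theorem forall_dvd_cartanMat_iff {q d x y : R} :
    (∀ i j, q ∣ cartanMat d x y i j) ↔ q ∣ x ∧ q ∣ y :=
  ⟨fun h => ⟨h 0 0, h 1 0⟩, fun ⟨hx, hy⟩ i j => by
    fin_cases i <;> fin_cases j <;> simp [cartanMat, hx, hy, Dvd.dvd.mul_left]⟩

end CartanMat

open PadicInt

section

variable {p : ℕ} [Fact p.Prime]

local notation "P" => (p : ℤ_[p])

namespace PadicInt

theorem isUnit_iff_not_dvd {x : ℤ_[p]} : IsUnit x ↔ ¬ P ∣ x := by
  rw [← IsLocalRing.notMem_maximalIdeal, maximalIdeal_eq_span_p, Ideal.mem_span_singleton]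

theorem isUnit_of_dvd_sub {x y : ℤ_[p]} (hx : IsUnit x) (h : P ∣ y - x) : IsUnit y := by
  rw [isUnit_iff_not_dvd] at hx ⊢
  exact fun hy => hx (by simpa using dvd_sub hy h)

theorem toZMod_eq_toZMod_iff {x y : ℤ_[p]} : toZMod x = toZMod y ↔ P ∣ x - y := by
  rw [← RingHom.sub_mem_ker_iff, ker_toZMod, maximalIdeal_eq_span_p, Ideal.mem_span_singleton]

theorem toZModPow_eq_toZModPow_iff {n : ℕ} {x y : ℤ_[p]} :
    toZModPow n x = toZModPow n y ↔ P ^ n ∣ x - y := by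
  rw [← RingHom.sub_mem_ker_iff, ker_toZModPow, Ideal.mem_span_singleton]

theorem pow_dvd_iff_le_valuation {x : ℤ_[p]} (hx : x ≠ 0) {n : ℕ} :
    P ^ n ∣ x ↔ n ≤ x.valuation := by
  rw [← Ideal.mem_span_singleton, mem_span_pow_iff_le_valuation x hx]

theorem pow_add_dvd_pow_mul_iff {m n : ℕ} {x : ℤ_[p]} : P ^ (m + n) ∣ P ^ m * x ↔ P ^ n ∣ x := by
  rw [pow_add, mul_dvd_mul_iff_left (pow_ne_zero m prime_p.ne_zero)]

theorem lt_and_pow_dvd_of_pow_dvd_mul {x y : ℤ_[p]} {b k : ℕ} (hxy : P ^ b ∣ x * y)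
    (hx : ¬ P ^ k ∣ x) (hy : ¬ P ^ k ∣ y) :
    b + 1 < 2 * k ∧ P ^ (b + 1) ∣ P ^ k * x ∧ P ^ (b + 1) ∣ P ^ k * y := by
  have hx0 : x ≠ 0 := by rintro rfl; exact hx (dvd_zero _)
  have hy0 : y ≠ 0 := by rintro rfl; exact hy (dvd_zero _)
  rw [pow_dvd_iff_le_valuation hx0] at hx
  rw [pow_dvd_iff_le_valuation hy0] at hy
  rw [pow_dvd_iff_le_valuation (mul_ne_zero hx0 hy0), valuation_mul hx0 hy0] at hxy
  rw [pow_dvd_iff_le_valuation (mul_ne_zero (pow_ne_zero _ prime_p.ne_zero) hx0),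
    pow_dvd_iff_le_valuation (mul_ne_zero (pow_ne_zero _ prime_p.ne_zero) hy0),
    valuation_p_pow_mul _ _ hx0, valuation_p_pow_mul _ _ hy0]
  omega

theorem isUnit_norm_of_dvd_sub {d x y x' y' : ℤ_[p]} (h : IsUnit (x ^ 2 - d * y ^ 2))
    (hx : P ∣ x' - x) (hy : P ∣ y' - y) : IsUnit (x' ^ 2 - d * y' ^ 2) := by
  obtain ⟨u, hu⟩ := hx
  obtain ⟨v, hv⟩ := hy
  exact isUnit_of_dvd_sub h
    ⟨(x' + x) * u - d * (y' + y) * v, by linear_combination (x' + x) * hu - d * (y' + y) * hv⟩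

end PadicInt

theorem valEq.of_dvd_sub {x y : ℤ_[p]} {b : ℕ} (hx : valEq x b) (h : P ^ (b + 1) ∣ y - x) :
    valEq y b :=
  ⟨by simpa using dvd_add hx.1 ((pow_dvd_pow _ b.le_succ).trans h),
    fun hy => hx.2 (by simpa using dvd_sub hy h)⟩

theorem valEq_unit_mul {u x : ℤ_[p]} {b : ℕ} (hu : IsUnit u) : valEq (u * x) b ↔ valEq x b := by
  simp only [valEq, hu.dvd_mul_left]

theorem valEq_pow_mul {x : ℤ_[p]} {b c : ℕ} : valEq (P ^ c * x) (c + b) ↔ valEq x b := by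
  rw [valEq, valEq, add_assoc, pow_add_dvd_pow_mul_iff, pow_add_dvd_pow_mul_iff]

noncomputable def sqLifts (d z : ℤ_[p]) (k b : ℕ) : Set (ZMod p) :=
  toZMod '' {u | valEq ((z + P ^ k * u) ^ 2 - d) b}

theorem sqLifts_add_pow_mul (d z w : ℤ_[p]) (k b : ℕ) :
    sqLifts d (z + P ^ k * w) k b = (· - toZMod w) '' sqLifts d z k b := by
  ext ψ
  simp only [sqLifts, Set.mem_image, Set.mem_ofPred_eq]
  constructor
  · rintro ⟨u, hu, rfl⟩
    exact ⟨_, ⟨w + u, by rwa [mul_add, ← add_assoc], rfl⟩, by simp⟩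
  · rintro ⟨_, ⟨u, hu, rfl⟩, rfl⟩
    exact ⟨u - w, by rwa [show z + P ^ k * w + P ^ k * (u - w) = z + P ^ k * u by ring], by simp⟩

theorem sqLifts_neg (d z : ℤ_[p]) (k b : ℕ) : sqLifts d (-z) k b = Neg.neg '' sqLifts d z k b := by
  ext ψ
  simp only [sqLifts, Set.mem_image, Set.mem_ofPred_eq]
  constructor
  · rintro ⟨u, hu, rfl⟩
    exact ⟨_, ⟨-u, by rwa [show (z + P ^ k * -u) ^ 2 = (-z + P ^ k * u) ^ 2 by ring], rfl⟩, by simp⟩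
  · rintro ⟨_, ⟨u, hu, rfl⟩, rfl⟩
    exact ⟨-u, by rwa [show (-z + P ^ k * -u) ^ 2 = (z + P ^ k * u) ^ 2 by ring], by simp⟩

theorem sqLifts_eq_univ {d z : ℤ_[p]} {k b : ℕ} (hz : valEq (z ^ 2 - d) b)
    (h2z : P ^ (b + 1) ∣ P ^ k * (2 * z)) (hbk : b + 1 ≤ 2 * k) : sqLifts d z k b = Set.univ :=
  Set.eq_univ_of_forall fun ψ => ⟨ZMod.cast ψ, hz.of_dvd_sub <| by
    rw [show (z + P ^ k * ZMod.cast ψ) ^ 2 - d - (z ^ 2 - d)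
      = ZMod.cast ψ * (P ^ k * (2 * z)) + P ^ (2 * k) * (ZMod.cast ψ) ^ 2 by ring]
    exact dvd_add (h2z.mul_left _) ((pow_dvd_pow _ hbk).mul_right _),
    ZMod.ringHom_map_cast _ ψ⟩

theorem ncard_sqLifts_eq {d z₁ z₂ : ℤ_[p]} {k b : ℕ} (h₁ : valEq (z₁ ^ 2 - d) b)
    (h₂ : valEq (z₂ ^ 2 - d) b) : (sqLifts d z₁ k b).ncard = (sqLifts d z₂ k b).ncard := by
  by_cases hsub : P ^ k ∣ z₁ - z₂
  · obtain ⟨w, hw⟩ := hsub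
    rw [show z₁ = z₂ + P ^ k * w by linear_combination hw, sqLifts_add_pow_mul,
      Set.ncard_image_of_injective _ sub_left_injective]
  by_cases hadd : P ^ k ∣ z₁ + z₂
  · obtain ⟨w, hw⟩ := hadd
    rw [show z₁ = -z₂ + P ^ k * w by linear_combination hw, sqLifts_add_pow_mul,
      Set.ncard_image_of_injective _ sub_left_injective, sqLifts_neg,
      Set.ncard_image_of_injective _ neg_injective]
  have hprod : P ^ b ∣ (z₁ - z₂) * (z₁ + z₂) := by
    convert dvd_sub h₁.1 h₂.1 using 1
    ring
  obtain ⟨hbk, hsub', hadd'⟩ := lt_and_pow_dvd_of_pow_dvd_mul hprod hsub hadd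
  rw [sqLifts_eq_univ h₁ ?_ hbk.le, sqLifts_eq_univ h₂ ?_ hbk.le]
  · simpa [two_mul, mul_add, mul_sub] using dvd_sub hadd' hsub'
  · simpa [two_mul, mul_add, mul_sub] using dvd_add hsub' hadd'

/-- For `b > k`, whether `v((X + p^k s)² - d (Y + p^k t)²) = b` depends on more than
`(s, t) mod p`, hence the existential over lifts. -/
noncomputable def normLifts (d X Y : ℤ_[p]) (k b : ℕ) : Set (ZMod p × ZMod p) :=
  Prod.map toZMod toZMod '' {st | valEq ((X + P ^ k * st.1) ^ 2 - d * (Y + P ^ k * st.2) ^ 2) b}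

theorem normLifts_eq_univ {d X Y : ℤ_[p]} {k : ℕ} (hk : k ≠ 0) (h : valEq (X ^ 2 - d * Y ^ 2) 0) :
    normLifts d X Y k 0 = Set.univ := by
  refine Set.eq_univ_of_forall fun στ => ⟨(ZMod.cast στ.1, ZMod.cast στ.2), h.of_dvd_sub ?_,
    by simp [ZMod.ringHom_map_cast]⟩
  set s : ℤ_[p] := ZMod.cast στ.1
  set t : ℤ_[p] := ZMod.cast στ.2
  exact (dvd_pow_self _ hk).trans ⟨2 * X * s + P ^ k * s ^ 2 - d * (2 * Y * t + P ^ k * t ^ 2),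
    by ring⟩

theorem normLifts_mul_unit {d : ℤ_[p]} {k : ℕ} (hk : k ≠ 0) (b : ℕ) (z : ℤ_[p]) (v : ℤ_[p]ˣ) :
    normLifts d (z * v) v k b =
      (fun ψτ : ZMod p × ZMod p => (toZMod (v : ℤ_[p]) * ψτ.1 + toZMod z * ψτ.2, ψτ.2)) ''
        (sqLifts d z k b ×ˢ Set.univ) := by
  set y : ℤ_[p] := (v : ℤ_[p])
  have hw : ∀ t, IsUnit (y + P ^ k * t) := fun t =>
    isUnit_of_dvd_sub (x := y) v.isUnit
      (by rw [add_sub_cancel_left]; exact (dvd_pow_self _ hk).mul_right t)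
  -- with `w = y + p^k t`, the lift `s = u w + z t` makes `z y + p^k s = (z + p^k u) w`
  have key : ∀ u t, valEq ((z * y + P ^ k * (u * (y + P ^ k * t) + z * t)) ^ 2
      - d * (y + P ^ k * t) ^ 2) b ↔ valEq ((z + P ^ k * u) ^ 2 - d) b := fun u t => by
    rw [show (z * y + P ^ k * (u * (y + P ^ k * t) + z * t)) ^ 2 - d * (y + P ^ k * t) ^ 2
      = (y + P ^ k * t) ^ 2 * ((z + P ^ k * u) ^ 2 - d) by ring]
    exact valEq_unit_mul ((hw t).pow 2)
  have hres : ∀ u t, toZMod (u * (y + P ^ k * t) + z * t) =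
      toZMod y * toZMod u + toZMod z * toZMod t := fun u t => by
    simp [hk, mul_comm]
  ext ⟨σ, τ⟩
  simp only [normLifts, sqLifts, Set.mem_image, Set.mem_prod, Set.mem_univ, and_true,
    Prod.exists, Prod.map, Prod.mk.injEq, Set.mem_ofPred_eq]
  constructor
  · rintro ⟨s, t, hst, rfl, rfl⟩
    obtain ⟨w, hw'⟩ := hw t
    have hs : s = (s - z * t) * ↑w⁻¹ * (y + P ^ k * t) + z * t := by
      rw [← hw', mul_assoc, Units.inv_mul, mul_one, sub_add_cancel]
    rw [hs] at hst
    refine ⟨_, _, ⟨_, (key _ t).1 hst, rfl⟩, ?_, rfl⟩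
    rw [← hres, ← hs]
  · rintro ⟨_, τ, ⟨u, hu, rfl⟩, rfl, rfl⟩
    obtain ⟨t, rfl⟩ := ZMod.ringHom_surjective toZMod τ
    exact ⟨u * (y + P ^ k * t) + z * t, t, (key u t).2 hu, hres u t, rfl⟩

theorem ncard_normLifts_mul_unit {d : ℤ_[p]} {k : ℕ} (hk : k ≠ 0) (b : ℕ) (z : ℤ_[p])
    (v : ℤ_[p]ˣ) : (normLifts d (z * v) v k b).ncard = (sqLifts d z k b).ncard * p := by
  rw [normLifts_mul_unit hk, Set.ncard_image_of_injective, Set.ncard_prod, Set.ncard_univ,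
    Nat.card_zmod]
  rintro ⟨ψ, τ⟩ ⟨ψ', τ'⟩ h
  simp only [Prod.mk.injEq] at h
  obtain ⟨h, rfl⟩ := h
  rw [add_left_inj, mul_right_inj' (v.isUnit.map toZMod).ne_zero] at h
  rw [h]

theorem isUnit_of_valEq_norm {d X Y : ℤ_[p]} {b : ℕ} (hb : b ≠ 0) (hprim : ¬ (P ∣ X ∧ P ∣ Y))
    (h : valEq (X ^ 2 - d * Y ^ 2) b) : IsUnit Y := by
  refine isUnit_iff_not_dvd.2 fun hY => hprim ⟨prime_p.dvd_of_dvd_pow (n := 2) ?_, hY⟩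
  simpa using dvd_add ((dvd_pow_self _ hb).trans h.1) ((hY.pow two_ne_zero).mul_left d)

theorem valEq_mul_inv_sq_sub {d X : ℤ_[p]} {b : ℕ} (v : ℤ_[p]ˣ) :
    valEq ((X * (↑v⁻¹ : ℤ_[p])) ^ 2 - d) b ↔ valEq (X ^ 2 - d * (v : ℤ_[p]) ^ 2) b := by
  have hv : (↑v⁻¹ : ℤ_[p]) * v = 1 := v.inv_mul
  rw [← valEq_unit_mul (x := X ^ 2 - d * (v : ℤ_[p]) ^ 2) (v⁻¹.isUnit.pow 2)]
  congr! 1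
  linear_combination d * ((↑v⁻¹ : ℤ_[p]) * v + 1) * hv

theorem ncard_normLifts_eq {d X₁ Y₁ X₂ Y₂ : ℤ_[p]} {k b : ℕ} (hk : k ≠ 0)
    (hprim₁ : ¬ (P ∣ X₁ ∧ P ∣ Y₁)) (h₁ : valEq (X₁ ^ 2 - d * Y₁ ^ 2) b)
    (hprim₂ : ¬ (P ∣ X₂ ∧ P ∣ Y₂)) (h₂ : valEq (X₂ ^ 2 - d * Y₂ ^ 2) b) :
    (normLifts d X₁ Y₁ k b).ncard = (normLifts d X₂ Y₂ k b).ncard := by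
  rcases eq_or_ne b 0 with rfl | hb
  · rw [normLifts_eq_univ hk h₁, normLifts_eq_univ hk h₂]
  obtain ⟨v₁, rfl⟩ := isUnit_of_valEq_norm hb hprim₁ h₁
  obtain ⟨v₂, rfl⟩ := isUnit_of_valEq_norm hb hprim₂ h₂
  rw [← Units.inv_mul_cancel_right X₁ v₁, ← Units.inv_mul_cancel_right X₂ v₂,
    ncard_normLifts_mul_unit hk, ncard_normLifts_mul_unit hk,
    ncard_sqLifts_eq ((valEq_mul_inv_sq_sub v₁).2 h₁) ((valEq_mul_inv_sq_sub v₂).2 h₂)]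

theorem mem_cartan_iff {d : ℤ_[p]} {C : Subgroup (GL (Fin 2) ℤ_[p])} (hC : IsCartan 0 d C)
    {M : GL (Fin 2) ℤ_[p]} :
    M ∈ C ↔ ∃ x y, (M : Matrix (Fin 2) (Fin 2) ℤ_[p]) = cartanMat d x y := by
  rw [← SetLike.mem_coe, hC]
  simp [CartanSet, cartanMat]

open Classical in
noncomputable def cartanGL (d x y : ℤ_[p]) : GL (Fin 2) ℤ_[p] :=
  if h : IsUnit (x ^ 2 - d * y ^ 2) then
    Matrix.nonsingInvUnit (cartanMat d x y) (by rwa [det_cartanMat])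
  else 1

theorem coe_cartanGL {d x y : ℤ_[p]} (h : IsUnit (x ^ 2 - d * y ^ 2)) :
    (cartanGL d x y : Matrix (Fin 2) (Fin 2) ℤ_[p]) = cartanMat d x y := by
  rw [cartanGL, dif_pos h]
  rfl

theorem redGL_eq_iff {n : ℕ} {A B : GL (Fin 2) ℤ_[p]} :
    redGL p n A = redGL p n B ↔
      ∀ i j, P ^ n ∣ ((A : Matrix (Fin 2) (Fin 2) ℤ_[p]) - B) i j := by
  simp only [Units.ext_iff, ← Matrix.ext_iff, redGL, Matrix.GeneralLinearGroup.map_apply,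
    toZModPow_eq_toZModPow_iff, Matrix.sub_apply]

theorem modI_iff_redGL_eq_one {n : ℕ} {M : GL (Fin 2) ℤ_[p]} : modI n M ↔ redGL p n M = 1 := by
  rw [← map_one (redGL p n), redGL_eq_iff, modI, Units.val_one]

theorem redGL_eq_iff_of_cartan {n : ℕ} {d x y x' y' : ℤ_[p]} {A B : GL (Fin 2) ℤ_[p]}
    (hA : (A : Matrix (Fin 2) (Fin 2) ℤ_[p]) = cartanMat d x y)
    (hB : (B : Matrix (Fin 2) (Fin 2) ℤ_[p]) = cartanMat d x' y') :
    redGL p n A = redGL p n B ↔ P ^ n ∣ x - x' ∧ P ^ n ∣ y - y' := by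
  rw [redGL_eq_iff, hA, hB, cartanMat_sub, forall_dvd_cartanMat_iff]

theorem castGL_redGL (n : ℕ) (A : GL (Fin 2) ℤ_[p]) :
    castGL p n (redGL p (n + 1) A) = redGL p n A := by
  rw [castGL, redGL, redGL, ← Matrix.GeneralLinearGroup.map_comp_apply,
    ← Matrix.GeneralLinearGroup.map_comp, zmod_cast_comp_toZModPow n (n + 1) n.le_succ]

theorem condE_iff_of_cartan {d X Y : ℤ_[p]} {a b : ℕ} {M : GL (Fin 2) ℤ_[p]}
    (hM : (M : Matrix (Fin 2) (Fin 2) ℤ_[p]) = cartanMat d (1 + P ^ a * X) (P ^ a * Y)) :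
    CondE a b M ↔ ¬ (P ∣ X ∧ P ∣ Y) ∧ valEq (X ^ 2 - d * Y ^ 2) b := by
  have hM1 : (M : Matrix (Fin 2) (Fin 2) ℤ_[p]) - 1 = cartanMat d (P ^ a * X) (P ^ a * Y) := by
    rw [hM, cartanMat_sub_one, add_sub_cancel_left]
  have hmod : ∀ j, modI (a + j) M ↔ P ^ j ∣ X ∧ P ^ j ∣ Y := fun j => by
    rw [modI, hM1, forall_dvd_cartanMat_iff, pow_add_dvd_pow_mul_iff, pow_add_dvd_pow_mul_iff]
  have hdet : ((M : Matrix (Fin 2) (Fin 2) ℤ_[p]) - 1).det =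
      P ^ (2 * a) * (X ^ 2 - d * Y ^ 2) := by
    rw [hM1, det_cartanMat]; ring
  have ha : modI a M := by simpa using hmod 0
  rw [CondE, hmod 1, hdet, valEq_pow_mul, pow_one]
  exact ⟨fun h => h.2, fun h => ⟨ha, h⟩⟩

theorem exists_coe_eq_cartanMat_of_modI {d : ℤ_[p]} {C : Subgroup (GL (Fin 2) ℤ_[p])}
    (hC : IsCartan 0 d C) {a : ℕ} {M : GL (Fin 2) ℤ_[p]} (hM : M ∈ C) (ha : modI a M) :
    ∃ X Y, (M : Matrix (Fin 2) (Fin 2) ℤ_[p]) = cartanMat d (1 + P ^ a * X) (P ^ a * Y) := by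
  obtain ⟨x, y, hxy⟩ := (mem_cartan_iff hC).1 hM
  rw [modI, hxy, cartanMat_sub_one, forall_dvd_cartanMat_iff] at ha
  obtain ⟨⟨X, hX⟩, ⟨Y, hY⟩⟩ := ha
  exact ⟨X, Y, by rw [hxy, ← hX, ← hY, add_sub_cancel]⟩

theorem mem_of_redGL_eq {C G : Subgroup (GL (Fin 2) ℤ_[p])} (hGC : G ≤ C) {n₀ n : ℕ}
    (hG : ∀ M ∈ C, modI n₀ M → M ∈ G) (hn : n₀ ≤ n) {N N' : GL (Fin 2) ℤ_[p]} (hN : N ∈ G)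
    (hN' : N' ∈ C) (h : redGL p n N' = redGL p n N) : N' ∈ G := by
  have hmod : modI n (N⁻¹ * N') :=
    modI_iff_redGL_eq_one.2 (by rw [map_mul, map_inv, h, inv_mul_cancel])
  simpa using mul_mem hN (hG _ (mul_mem (inv_mem (hGC hN)) hN')
    fun i j => (pow_dvd_pow _ hn).trans (hmod i j))

theorem castGL_fiber_eq_image (S : Set (GL (Fin 2) ℤ_[p])) (n : ℕ) (N : GL (Fin 2) ℤ_[p]) :
    {M' | M' ∈ redGL p (n + 1) '' S ∧ castGL p n M' = redGL p n N} =
      redGL p (n + 1) '' {N' ∈ S | redGL p n N' = redGL p n N} := by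
  ext M'
  constructor
  · rintro ⟨⟨N', hN', rfl⟩, h⟩
    exact ⟨N', ⟨hN', by rwa [castGL_redGL] at h⟩, rfl⟩
  · rintro ⟨N', ⟨hN', h⟩, rfl⟩
    exact ⟨⟨N', hN', rfl⟩, by rwa [castGL_redGL]⟩

theorem coe_cartanGL_lift {d X Y : ℤ_[p]} {a k : ℕ} (hak : a + k ≠ 0) {N : GL (Fin 2) ℤ_[p]}
    (hN : (N : Matrix (Fin 2) (Fin 2) ℤ_[p]) = cartanMat d (1 + P ^ a * X) (P ^ a * Y))
    (s t : ℤ_[p]) :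
    (cartanGL d (1 + P ^ a * (X + P ^ k * s)) (P ^ a * (Y + P ^ k * t)) :
        Matrix (Fin 2) (Fin 2) ℤ_[p]) =
      cartanMat d (1 + P ^ a * (X + P ^ k * s)) (P ^ a * (Y + P ^ k * t)) := by
  refine coe_cartanGL (isUnit_norm_of_dvd_sub (x := 1 + P ^ a * X) (y := P ^ a * Y) ?_
    ((dvd_pow_self _ hak).trans ⟨s, by ring⟩)
    ((dvd_pow_self _ hak).trans ⟨t, by ring⟩))
  rw [← det_cartanMat, ← hN]
  exact (Matrix.isUnit_iff_isUnit_det _).1 N.isUnit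

theorem setOf_mem_Mset_redGL_eq {d X Y : ℤ_[p]} {C G : Subgroup (GL (Fin 2) ℤ_[p])}
    (hC : IsCartan 0 d C) (hGC : G ≤ C) {n₀ : ℕ} (hG : ∀ M ∈ C, modI n₀ M → M ∈ G)
    {a b k : ℕ} (hk : k ≠ 0) (hn : n₀ ≤ a + k) {N : GL (Fin 2) ℤ_[p]} (hN : N ∈ G)
    (hNmat : (N : Matrix (Fin 2) (Fin 2) ℤ_[p]) = cartanMat d (1 + P ^ a * X) (P ^ a * Y))
    (hprim : ¬ (P ∣ X ∧ P ∣ Y)) :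
    {N' ∈ Mset G a b | redGL p (a + k) N' = redGL p (a + k) N} =
      (fun st : ℤ_[p] × ℤ_[p] =>
          cartanGL d (1 + P ^ a * (X + P ^ k * st.1)) (P ^ a * (Y + P ^ k * st.2))) ''
        {st | valEq ((X + P ^ k * st.1) ^ 2 - d * (Y + P ^ k * st.2) ^ 2) b} := by
  have hL := coe_cartanGL_lift (k := k) (by omega) hNmat
  ext N'
  constructor
  · rintro ⟨⟨hN'G, hN'E⟩, hred⟩
    obtain ⟨x, y, hxy⟩ := (mem_cartan_iff hC).1 (hGC hN'G)
    obtain ⟨⟨s, hs⟩, ⟨t, ht⟩⟩ := (redGL_eq_iff_of_cartan hxy hNmat).1 hred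
    have hN'L : (N' : Matrix (Fin 2) (Fin 2) ℤ_[p]) =
        cartanMat d (1 + P ^ a * (X + P ^ k * s)) (P ^ a * (Y + P ^ k * t)) := by
      rw [hxy]
      congr 1
      · linear_combination hs
      · linear_combination ht
    exact ⟨(s, t), ((condE_iff_of_cartan hN'L).1 hN'E).2, Units.ext ((hL s t).trans hN'L.symm)⟩
  · rintro ⟨⟨s, t⟩, hst, rfl⟩
    have hred := (redGL_eq_iff_of_cartan (n := a + k) (hL s t) hNmat).2
      ⟨⟨s, by ring⟩, ⟨t, by ring⟩⟩
    refine ⟨⟨mem_of_redGL_eq hGC hG hn hN ((mem_cartan_iff hC).2 ⟨_, _, hL s t⟩) hred,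
      (condE_iff_of_cartan (hL s t)).2 ⟨fun ⟨h₁, h₂⟩ => hprim ⟨?_, ?_⟩, hst⟩⟩, hred⟩
    · simpa using dvd_sub h₁ ((dvd_pow_self _ hk).mul_right s)
    · simpa using dvd_sub h₂ ((dvd_pow_self _ hk).mul_right t)

theorem ncard_fiber_eq_ncard_normLifts {d X Y : ℤ_[p]} {C G : Subgroup (GL (Fin 2) ℤ_[p])}
    (hC : IsCartan 0 d C) (hGC : G ≤ C) {n₀ : ℕ} (hG : ∀ M ∈ C, modI n₀ M → M ∈ G)
    {a b k : ℕ} (hk : k ≠ 0) (hn : n₀ ≤ a + k) {N : GL (Fin 2) ℤ_[p]} (hN : N ∈ G)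
    (hNmat : (N : Matrix (Fin 2) (Fin 2) ℤ_[p]) = cartanMat d (1 + P ^ a * X) (P ^ a * Y))
    (hprim : ¬ (P ∣ X ∧ P ∣ Y)) :
    {M' : GL (Fin 2) (ZMod (p ^ (a + k + 1))) |
        M' ∈ redGL p (a + k + 1) '' Mset G a b ∧ castGL p (a + k) M' = redGL p (a + k) N}.ncard =
      (normLifts d X Y k b).ncard := by
  have hL := coe_cartanGL_lift (k := k) (by omega) hNmat
  rw [castGL_fiber_eq_image, setOf_mem_Mset_redGL_eq hC hGC hG hk hn hN hNmat hprim,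
    Set.image_image, normLifts]
  refine Set.ncard_image_eq_ncard_image_of_iff fun st _ st' _ => ?_
  rw [redGL_eq_iff_of_cartan (hL _ _) (hL _ _), Prod.ext_iff, Prod.map_fst, Prod.map_fst,
    Prod.map_snd, Prod.map_snd, toZMod_eq_toZMod_iff, toZMod_eq_toZMod_iff,
    show 1 + P ^ a * (X + P ^ k * st.1) - (1 + P ^ a * (X + P ^ k * st'.1))
      = P ^ (a + k) * (st.1 - st'.1) by ring,
    show P ^ a * (Y + P ^ k * st.2) - P ^ a * (Y + P ^ k * st'.2)
      = P ^ (a + k) * (st.2 - st'.2) by ring,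
    pow_add_dvd_pow_mul_iff, pow_add_dvd_pow_mul_iff, pow_one]

end

theorem Mset_ramified_Cartan_lift_count_independent_general
    (p : ℕ) [Fact p.Prime] (d : ℤ_[p])
    (C : Subgroup (GL (Fin 2) ℤ_[p])) (hC : IsCartan 0 d C)
    (G : Subgroup (GL (Fin 2) ℤ_[p])) (hGC : G ≤ C)
    (n₀ : ℕ) (hG : ∀ M ∈ C, modI n₀ M → M ∈ G)
    (a b n : ℕ) (hn : n₀ ≤ n)
    (M₁ M₂ : GL (Fin 2) (ZMod (p ^ n)))
    (h₁ : M₁ ∈ redGL p n '' Mset G a b) (h₂ : M₂ ∈ redGL p n '' Mset G a b) :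
    {M' : GL (Fin 2) (ZMod (p ^ (n + 1))) |
        M' ∈ redGL p (n + 1) '' Mset G a b ∧ castGL p n M' = M₁}.ncard =
    {M' : GL (Fin 2) (ZMod (p ^ (n + 1))) |
        M' ∈ redGL p (n + 1) '' Mset G a b ∧ castGL p n M' = M₂}.ncard := by
  obtain ⟨N₁, hN₁, rfl⟩ := h₁
  obtain ⟨N₂, hN₂, rfl⟩ := h₂
  rcases le_or_gt n a with hna | han
  · have hone : ∀ N ∈ Mset G a b, redGL p n N = 1 := fun N hN =>
      modI_iff_redGL_eq_one.1 fun i j => (pow_dvd_pow _ hna).trans (hN.2.1 i j)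
    rw [hone N₁ hN₁, hone N₂ hN₂]
  obtain ⟨k, rfl⟩ := Nat.exists_eq_add_of_le han.le
  have hk : k ≠ 0 := by omega
  obtain ⟨X₁, Y₁, hX₁⟩ := exists_coe_eq_cartanMat_of_modI hC (hGC hN₁.1) hN₁.2.1
  obtain ⟨X₂, Y₂, hX₂⟩ := exists_coe_eq_cartanMat_of_modI hC (hGC hN₂.1) hN₂.2.1
  obtain ⟨hprim₁, hval₁⟩ := (condE_iff_of_cartan hX₁).1 hN₁.2
  obtain ⟨hprim₂, hval₂⟩ := (condE_iff_of_cartan hX₂).1 hN₂.2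
  rw [ncard_fiber_eq_ncard_normLifts hC hGC hG hk hn hN₁.1 hX₁ hprim₁,
    ncard_fiber_eq_ncard_normLifts hC hGC hG hk hn hN₂.1 hX₂ hprim₂]
  exact ncard_normLifts_eq hk hprim₁ hval₁ hprim₂ hval₂

/-- for an open subgroup `G` of a ramified Cartan subgroup `C(0,d)`, the
number of lifts from `𝓜_{a,b}(G)(n)` to `𝓜_{a,b}(G)(n+1)` is independent of the matrix. -/
theorem Mset_ramified_Cartan_lift_count_independent
    (p : ℕ) [Fact p.Prime] (d : ℤ_[p]) (hd : d ≠ 0) (hram : Odd p → (p : ℤ_[p]) ∣ d)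
    (C : Subgroup (GL (Fin 2) ℤ_[p])) (hC : IsCartan 0 d C)
    (G : Subgroup (GL (Fin 2) ℤ_[p])) (hGC : G ≤ C)
    (n₀ : ℕ) (hn₀ : 1 ≤ n₀) (hG : ∀ M ∈ C, modI n₀ M → M ∈ G)
    (a b n : ℕ) (hn : n₀ ≤ n)
    (M₁ M₂ : GL (Fin 2) (ZMod (p ^ n)))
    (h₁ : M₁ ∈ redGL p n '' Mset G a b) (h₂ : M₂ ∈ redGL p n '' Mset G a b) :
    {M' : GL (Fin 2) (ZMod (p ^ (n + 1))) |
        M' ∈ redGL p (n + 1) '' Mset G a b ∧ castGL p n M' = M₁}.ncard =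
    {M' : GL (Fin 2) (ZMod (p ^ (n + 1))) |
        M' ∈ redGL p (n + 1) '' Mset G a b ∧ castGL p n M' = M₂}.ncard :=
  Mset_ramified_Cartan_lift_count_independent_general p d C hC G hGC n₀ hG a b n hn M₁ M₂ h₁ h₂
end

section
/- Let C = C(c,d) be a Cartan subgroup of GL₂(ℤ_ℓ) with normalized parameters (c,d), let G be an open subgroup of C, and let n₀ ≥ 1 be an integer such that every M ∈ C with M ≡ I (mod ℓ^{n₀}) belongs to G. Fix integers a ≥ n₀ and b ≥ 0, and set n = a + b + 2. Then the map φ(M) := I + ℓ·(M − I), computed in Mat₂(ℤ/ℓⁿℤ), is a well-defined surjection from 𝓜_{a,b}(G)(n) onto 𝓜_{a+1,b}(G)(n), and every element of 𝓜_{a+1,b}(G)(n) has exactly ℓ² preimages under φ; in particular #𝓜_{a,b}(G)(n) = ℓ² · #𝓜_{a+1,b}(G)(n). -/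
open Matrix Polynomial

/-- The image of `𝓜_{a,b}(G)` in `Mat₂(ℤ/ℓⁿℤ)` (entrywise reduction). -/
def MredMat (p : ℕ) [Fact p.Prime] (G : Subgroup (GL (Fin 2) ℤ_[p])) (a b n : ℕ) :
    Set (Matrix (Fin 2) (Fin 2) (ZMod (p ^ n))) :=
  (fun M : GL (Fin 2) ℤ_[p] =>
      (M : Matrix (Fin 2) (Fin 2) ℤ_[p]).map (PadicInt.toZModPow n)) '' Mset G a b

namespace Phi19

open PadicInt Matrix

variable {p : ℕ} [Fact p.Prime]

lemma pZ_ne_zero : (p : ℤ_[p]) ≠ 0 :=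
  Nat.cast_ne_zero.mpr (Fact.out : p.Prime).ne_zero

lemma toZModPow_eq_iff (n : ℕ) (x y : ℤ_[p]) :
    toZModPow n x = toZModPow n y ↔ (p : ℤ_[p]) ^ n ∣ x - y := by
  rw [← sub_eq_zero, ← map_sub, ← RingHom.mem_ker, ker_toZModPow, Ideal.mem_span_singleton]

lemma isUnit_one_add {x : ℤ_[p]} (h : (p : ℤ_[p]) ∣ x) : IsUnit (1 + x) := by
  have hx : -x ∈ nonunits ℤ_[p] := by
    rw [mem_nonunits_iff, PadicInt.not_isUnit_iff, norm_neg]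
    exact (PadicInt.norm_lt_one_iff_dvd x).mpr h
  simpa [sub_neg_eq_add] using IsLocalRing.isUnit_one_sub_self_of_mem_nonunits _ hx



variable {p : ℕ} [Fact p.Prime]

/-- The Cartan matrix with parameters `(c,d)` and coordinates `x = 1 + e`, `y`. -/
noncomputable def cm (c d e y : ℤ_[p]) : Matrix (Fin 2) (Fin 2) ℤ_[p] :=
  !![1 + e, d * y; y, 1 + e + c * y]

lemma cm_sub_one (c d e y : ℤ_[p]) :
    cm c d e y - 1 = !![e, d * y; y, e + c * y] := by
  rw [cm, Matrix.one_fin_two]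
  ext i j
  fin_cases i <;> fin_cases j <;> simp <;> ring

lemma cm_det_sub_one (c d e y : ℤ_[p]) :
    (!![e, d * y; y, e + c * y] : Matrix (Fin 2) (Fin 2) ℤ_[p]).det
      = e * (e + c * y) - d * y * y := by
  rw [Matrix.det_fin_two_of]

/-- The condition `E(a,b)` expressed on coordinates. -/
def PP (c d : ℤ_[p]) (a b : ℕ) (e y : ℤ_[p]) : Prop :=
  ((p : ℤ_[p]) ^ a ∣ e ∧ (p : ℤ_[p]) ^ a ∣ y) ∧
    ¬((p : ℤ_[p]) ^ (a + 1) ∣ e ∧ (p : ℤ_[p]) ^ (a + 1) ∣ y) ∧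
      valEq (e * (e + c * y) - d * y * y) (2 * a + b)

lemma mem_MredMat_iff
    (c d : ℤ_[p]) (C G : Subgroup (GL (Fin 2) ℤ_[p]))
    (hC : IsCartan c d C) (hGC : G ≤ C)
    (n₀ : ℕ) (hn₀ : 1 ≤ n₀) (hG : ∀ M ∈ C, modI n₀ M → M ∈ G)
    (a b n : ℕ) (ha : n₀ ≤ a)
    (A : Matrix (Fin 2) (Fin 2) (ZMod (p ^ n))) :
    A ∈ MredMat p G a b n ↔
      ∃ e y : ℤ_[p], PP c d a b e y ∧ A = (cm c d e y).map (PadicInt.toZModPow n) := by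
  constructor
  · rintro ⟨M, ⟨hMG, h1, h2, h3⟩, rfl⟩
    have hMC : M ∈ CartanSet c d := by
      have := hGC hMG
      rwa [← SetLike.mem_coe, hC] at this
    obtain ⟨x, y, hM⟩ := hMC
    have hsub : (M : Matrix (Fin 2) (Fin 2) ℤ_[p]) - 1
        = !![x - 1, d * y; y, x - 1 + c * y] := by
      rw [hM, Matrix.one_fin_two]
      ext i j
      fin_cases i <;> fin_cases j <;> simp <;> ring
    refine ⟨x - 1, y, ⟨⟨?_, ?_⟩, ?_, ?_⟩, ?_⟩
    · have := h1 0 0; rw [hsub] at this; simpa using this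
    · have := h1 1 0; rw [hsub] at this; simpa using this
    · rintro ⟨hd1, hd2⟩
      apply h2
      intro i j
      rw [hsub]
      fin_cases i <;> fin_cases j <;> simp <;>
        first
          | exact hd1
          | exact hd2
          | exact hd2.mul_left d
          | exact dvd_add hd1 (hd2.mul_left c)
    · rw [hsub, cm_det_sub_one] at h3
      exact h3
    · dsimp only
      congr 1
      rw [hM, cm]
      ext i j
      fin_cases i <;> fin_cases j <;> simp <;> ring
  · rintro ⟨e, y, ⟨⟨he, hy⟩, hnot, hdet⟩, rfl⟩
    have ha1 : 1 ≤ a := le_trans hn₀ ha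
    have hpe : (p : ℤ_[p]) ∣ e := (dvd_pow_self (p : ℤ_[p]) (by omega)).trans he
    have hpy : (p : ℤ_[p]) ∣ y := (dvd_pow_self (p : ℤ_[p]) (by omega)).trans hy
    have hdetU : IsUnit (cm c d e y).det := by
      rw [cm, Matrix.det_fin_two_of]
      have key : (1 + e) * (1 + e + c * y) - d * y * y
          = 1 + (e * (2 + e + c * y) + y * (c - d * y)) := by ring
      rw [key]
      exact isUnit_one_add (dvd_add (hpe.mul_right _) (hpy.mul_right _))
    have hdetU' : IsUnit (cm c d e y) := (Matrix.isUnit_iff_isUnit_det _).mpr hdetU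
    set M : GL (Fin 2) ℤ_[p] := hdetU'.unit with hMdef
    have hMcoe : (M : Matrix (Fin 2) (Fin 2) ℤ_[p]) = cm c d e y := hdetU'.unit_spec
    have hsub : (M : Matrix (Fin 2) (Fin 2) ℤ_[p]) - 1 = !![e, d * y; y, e + c * y] := by
      rw [hMcoe, cm_sub_one]
    have hmod : ∀ k : ℕ, k ≤ a → modI k M := by
      intro k hk i j
      rw [hsub]
      have hek : (p : ℤ_[p]) ^ k ∣ e := (pow_dvd_pow _ hk).trans he
      have hyk : (p : ℤ_[p]) ^ k ∣ y := (pow_dvd_pow _ hk).trans hy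
      fin_cases i <;> fin_cases j <;> simp <;>
        first
          | exact hek
          | exact hyk
          | exact hyk.mul_left d
          | exact dvd_add hek (hyk.mul_left c)
    have hMC : M ∈ C := by
      rw [← SetLike.mem_coe, hC]
      exact ⟨1 + e, y, by rw [hMcoe]; rfl⟩
    refine ⟨M, ⟨hG M hMC (hmod n₀ ha), hmod a le_rfl, ?_, ?_⟩, by dsimp only; rw [hMcoe]⟩
    · intro hcon
      apply hnot
      constructor
      · have := hcon 0 0; rw [hsub] at this; simpa using this
      · have := hcon 1 0; rw [hsub] at this; simpa using this
    · rw [hsub, cm_det_sub_one]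
      exact hdet



lemma map_phi (n : ℕ) (N : Matrix (Fin 2) (Fin 2) ℤ_[p]) :
    (1 : Matrix (Fin 2) (Fin 2) (ZMod (p ^ n))) +
        (p : ZMod (p ^ n)) • (N.map (PadicInt.toZModPow n) - 1)
      = ((1 : Matrix (Fin 2) (Fin 2) ℤ_[p]) + (p : ℤ_[p]) • (N - 1)).map
          (PadicInt.toZModPow n) := by
  ext i j
  by_cases h : i = j
  · subst h
    simp [Matrix.add_apply, Matrix.smul_apply, Matrix.sub_apply, Matrix.map_apply,
      Matrix.one_apply_eq, smul_eq_mul, _root_.map_add, _root_.map_mul, _root_.map_sub,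
      _root_.map_one, map_natCast, mul_sub]
  · simp [Matrix.add_apply, Matrix.smul_apply, Matrix.sub_apply, Matrix.map_apply,
      Matrix.one_apply_ne h, smul_eq_mul, _root_.map_add, _root_.map_mul, _root_.map_sub,
      _root_.map_one, map_natCast, mul_sub]

lemma one_add_smul_cm (c d e y : ℤ_[p]) :
    (1 : Matrix (Fin 2) (Fin 2) ℤ_[p]) + (p : ℤ_[p]) • (cm c d e y - 1)
      = cm c d ((p : ℤ_[p]) * e) ((p : ℤ_[p]) * y) := by
  rw [cm_sub_one, cm, Matrix.one_fin_two]
  ext i j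
  fin_cases i <;> fin_cases j <;>
    simp [Matrix.add_apply, Matrix.smul_apply, smul_eq_mul] <;> ring

lemma phi_cm (n : ℕ) (c d e y : ℤ_[p]) :
    (1 : Matrix (Fin 2) (Fin 2) (ZMod (p ^ n))) +
        (p : ZMod (p ^ n)) • ((cm c d e y).map (PadicInt.toZModPow n) - 1)
      = (cm c d ((p : ℤ_[p]) * e) ((p : ℤ_[p]) * y)).map (PadicInt.toZModPow n) := by
  rw [map_phi, one_add_smul_cm]

lemma cm_map_congr {n : ℕ} {c d e₁ y₁ e₂ y₂ : ℤ_[p]}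
    (h1 : PadicInt.toZModPow n e₁ = PadicInt.toZModPow n e₂)
    (h2 : PadicInt.toZModPow n y₁ = PadicInt.toZModPow n y₂) :
    (cm c d e₁ y₁).map (PadicInt.toZModPow n) = (cm c d e₂ y₂).map (PadicInt.toZModPow n) := by
  ext i j
  fin_cases i <;> fin_cases j <;>
    simp [cm, Matrix.map_apply, _root_.map_add, _root_.map_mul, _root_.map_one, h1, h2]

lemma pow_mul_dvd_iff (k m : ℕ) (x : ℤ_[p]) :
    (p : ℤ_[p]) ^ (k + m) ∣ (p : ℤ_[p]) ^ m * x ↔ (p : ℤ_[p]) ^ k ∣ x := by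
  rw [pow_add, mul_comm ((p : ℤ_[p]) ^ k), mul_dvd_mul_iff_left (pow_ne_zero m pZ_ne_zero)]

lemma pdvd (k : ℕ) (x : ℤ_[p]) :
    (p : ℤ_[p]) ^ (k + 1) ∣ (p : ℤ_[p]) * x ↔ (p : ℤ_[p]) ^ k ∣ x := by
  simpa [pow_one] using pow_mul_dvd_iff k 1 x

lemma valEq_p2_iff (x : ℤ_[p]) (k : ℕ) :
    valEq ((p : ℤ_[p]) ^ 2 * x) (k + 2) ↔ valEq x k := by
  unfold valEq
  have h3 : k + 2 + 1 = k + 1 + 2 := by omega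
  rw [h3, pow_mul_dvd_iff k 2 x, pow_mul_dvd_iff (k + 1) 2 x]

lemma PP_scale {c d : ℤ_[p]} {a b : ℕ} {e y : ℤ_[p]} (h : PP c d a b e y) :
    PP c d (a + 1) b ((p : ℤ_[p]) * e) ((p : ℤ_[p]) * y) := by
  obtain ⟨⟨he, hy⟩, hnot, hval⟩ := h
  refine ⟨⟨(pdvd a e).mpr he, (pdvd a y).mpr hy⟩, ?_, ?_⟩
  · rintro ⟨h1, h2⟩
    exact hnot ⟨(pdvd (a + 1) e).mp h1, (pdvd (a + 1) y).mp h2⟩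
  · have key : (p : ℤ_[p]) * e * ((p : ℤ_[p]) * e + c * ((p : ℤ_[p]) * y))
        - d * ((p : ℤ_[p]) * y) * ((p : ℤ_[p]) * y)
        = (p : ℤ_[p]) ^ 2 * (e * (e + c * y) - d * y * y) := by ring
    have hidx : 2 * (a + 1) + b = 2 * a + b + 2 := by omega
    rw [key, hidx, valEq_p2_iff]
    exact hval

lemma PP_unscale {c d : ℤ_[p]} {a b : ℕ} {e' y' : ℤ_[p]} (h : PP c d (a + 1) b e' y') :
    ∃ e y : ℤ_[p], e' = (p : ℤ_[p]) * e ∧ y' = (p : ℤ_[p]) * y ∧ PP c d a b e y := by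
  obtain ⟨⟨he', hy'⟩, hnot, hval⟩ := h
  obtain ⟨e, rfl⟩ : (p : ℤ_[p]) ∣ e' := (dvd_pow_self _ (by omega : a + 1 ≠ 0)).trans he'
  obtain ⟨y, rfl⟩ : (p : ℤ_[p]) ∣ y' := (dvd_pow_self _ (by omega : a + 1 ≠ 0)).trans hy'
  refine ⟨e, y, rfl, rfl, ⟨(pdvd a e).mp he', (pdvd a y).mp hy'⟩, ?_, ?_⟩
  · rintro ⟨h1, h2⟩
    exact hnot ⟨(pdvd (a + 1) e).mpr h1, (pdvd (a + 1) y).mpr h2⟩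
  · have key : (p : ℤ_[p]) * e * ((p : ℤ_[p]) * e + c * ((p : ℤ_[p]) * y))
        - d * ((p : ℤ_[p]) * y) * ((p : ℤ_[p]) * y)
        = (p : ℤ_[p]) ^ 2 * (e * (e + c * y) - d * y * y) := by ring
    have hidx : 2 * (a + 1) + b = 2 * a + b + 2 := by omega
    rw [key, hidx, valEq_p2_iff] at hval
    exact hval

lemma PP_pert {c d : ℤ_[p]} {a b : ℕ} {e y : ℤ_[p]} (h : PP c d a b e y) (w v : ℤ_[p]) :
    PP c d a b (e + (p : ℤ_[p]) ^ (a + b + 1) * w) (y + (p : ℤ_[p]) ^ (a + b + 1) * v) := by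
  obtain ⟨⟨he, hy⟩, hnot, hv1, hv2⟩ := h
  have hαa : (p : ℤ_[p]) ^ a ∣ (p : ℤ_[p]) ^ (a + b + 1) := pow_dvd_pow _ (by omega)
  have hαa1 : (p : ℤ_[p]) ^ (a + 1) ∣ (p : ℤ_[p]) ^ (a + b + 1) := pow_dvd_pow _ (by omega)
  obtain ⟨e₀, rfl⟩ := he
  obtain ⟨y₀, rfl⟩ := hy
  have key : ((p : ℤ_[p]) ^ a * e₀ + (p : ℤ_[p]) ^ (a + b + 1) * w) *
        (((p : ℤ_[p]) ^ a * e₀ + (p : ℤ_[p]) ^ (a + b + 1) * w) +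
          c * ((p : ℤ_[p]) ^ a * y₀ + (p : ℤ_[p]) ^ (a + b + 1) * v)) -
      d * ((p : ℤ_[p]) ^ a * y₀ + (p : ℤ_[p]) ^ (a + b + 1) * v) *
        ((p : ℤ_[p]) ^ a * y₀ + (p : ℤ_[p]) ^ (a + b + 1) * v)
      = ((p : ℤ_[p]) ^ a * e₀ * ((p : ℤ_[p]) ^ a * e₀ + c * ((p : ℤ_[p]) ^ a * y₀)) -
          d * ((p : ℤ_[p]) ^ a * y₀) * ((p : ℤ_[p]) ^ a * y₀)) +
        (p : ℤ_[p]) ^ (2 * a + b + 1) *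
          (e₀ * (2 * w) + c * (e₀ * v + y₀ * w) - d * (2 * (y₀ * v)) +
            (p : ℤ_[p]) ^ (b + 1) * (w * w + c * (w * v) - d * (v * v))) := by
    ring
  refine ⟨⟨dvd_add (Dvd.intro _ rfl) (hαa.mul_right _),
      dvd_add (Dvd.intro _ rfl) (hαa.mul_right _)⟩, ?_, ?_, ?_⟩
  · rintro ⟨h1, h2⟩
    refine hnot ⟨?_, ?_⟩
    · have := dvd_sub h1 (hαa1.mul_right w)
      simpa using this
    · have := dvd_sub h2 (hαa1.mul_right v)
      simpa using this
  · rw [key]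
    exact dvd_add hv1
      ((pow_dvd_pow _ (by omega : 2 * a + b ≤ 2 * a + b + 1)).trans (dvd_mul_right _ _))
  · intro hcon
    rw [key] at hcon
    have h' := dvd_sub hcon (dvd_mul_right ((p : ℤ_[p]) ^ (2 * a + b + 1))
      (e₀ * (2 * w) + c * (e₀ * v + y₀ * w) - d * (2 * (y₀ * v)) +
        (p : ℤ_[p]) ^ (b + 1) * (w * w + c * (w * v) - d * (v * v))))
    exact hv2 (by simpa using h')



lemma exists_dig (w : ℤ_[p]) : ∃ u : Fin p, (p : ℤ_[p]) ∣ w - ((u : ℕ) : ℤ_[p]) := by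
  haveI : NeZero p := ⟨(Fact.out : p.Prime).ne_zero⟩
  refine ⟨⟨(PadicInt.toZMod w).val, ZMod.val_lt _⟩, ?_⟩
  have h0 : PadicInt.toZMod (w - (((PadicInt.toZMod w).val : ℕ) : ℤ_[p])) = 0 := by
    rw [map_sub, map_natCast, ZMod.natCast_val, ZMod.cast_id, sub_self]
  have h1 := RingHom.mem_ker.mpr h0
  rw [PadicInt.ker_toZMod, PadicInt.maximalIdeal_eq_span_p, Ideal.mem_span_singleton] at h1
  exact h1

lemma dig_inj {u v : Fin p} (h : (p : ℤ_[p]) ∣ ((u : ℕ) : ℤ_[p]) - ((v : ℕ) : ℤ_[p])) :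
    u = v := by
  have h1 : ‖((((u : ℕ) : ℤ) - ((v : ℕ) : ℤ) : ℤ) : ℤ_[p])‖ < 1 := by
    rw [show ((((u : ℕ) : ℤ) - ((v : ℕ) : ℤ) : ℤ) : ℤ_[p])
        = ((u : ℕ) : ℤ_[p]) - ((v : ℕ) : ℤ_[p]) by push_cast; ring]
    exact (PadicInt.norm_lt_one_iff_dvd _).mpr h
  have h2 : (p : ℤ) ∣ ((u : ℕ) : ℤ) - ((v : ℕ) : ℤ) :=
    (PadicInt.norm_int_lt_one_iff_dvd _).mp h1
  have h3 : ((u : ℕ) : ℤ) - ((v : ℕ) : ℤ) = 0 := by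
    apply Int.eq_zero_of_abs_lt_dvd h2
    have hu := u.isLt
    have hv := v.isLt
    rw [abs_lt]
    omega
  have : (u : ℕ) = (v : ℕ) := by omega
  exact Fin.ext this

lemma cm_map_inj_entries {n : ℕ} {c d e₁ y₁ e₂ y₂ : ℤ_[p]}
    (h : (cm c d e₁ y₁).map (PadicInt.toZModPow n)
      = (cm c d e₂ y₂).map (PadicInt.toZModPow n)) :
    (p : ℤ_[p]) ^ n ∣ e₁ - e₂ ∧ (p : ℤ_[p]) ^ n ∣ y₁ - y₂ := by
  constructor
  · have h00 := congrFun (congrFun h 0) 0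
    simp only [Matrix.map_apply, cm, Matrix.cons_val', Matrix.cons_val_zero,
      Matrix.empty_val', Matrix.cons_val_fin_one] at h00
    rw [toZModPow_eq_iff] at h00
    simpa using h00
  · have h10 := congrFun (congrFun h 1) 0
    simp only [Matrix.map_apply, cm, Matrix.cons_val', Matrix.cons_val_zero,
      Matrix.empty_val', Matrix.cons_val_fin_one, Matrix.cons_val_one, Matrix.head_cons] at h10
    rw [toZModPow_eq_iff] at h10
    exact h10

end Phi19

/-- for `G` open in a Cartan subgroup and `a ≥ n₀`, the map
`φ(M) = I + ℓ(M − I)` is a surjection `𝓜_{a,b}(G)(n) → 𝓜_{a+1,b}(G)(n)` (`n = a+b+2`),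
each fiber having exactly `ℓ²` elements. -/
theorem phi_surjection_Cartan
    (p : ℕ) [Fact p.Prime] (c d : ℤ_[p]) (C : Subgroup (GL (Fin 2) ℤ_[p]))
    (hC : IsCartan c d C) (hcd : NormalizedParams p c d)
    (G : Subgroup (GL (Fin 2) ℤ_[p])) (hGC : G ≤ C)
    (n₀ : ℕ) (hn₀ : 1 ≤ n₀) (hG : ∀ M ∈ C, modI n₀ M → M ∈ G)
    (a b : ℕ) (ha : n₀ ≤ a) :
    (∀ A ∈ MredMat p G a b (a + b + 2),
      1 + (p : ZMod (p ^ (a + b + 2))) • (A - 1) ∈ MredMat p G (a + 1) b (a + b + 2)) ∧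
    (∀ B ∈ MredMat p G (a + 1) b (a + b + 2), ∃ A ∈ MredMat p G a b (a + b + 2),
      1 + (p : ZMod (p ^ (a + b + 2))) • (A - 1) = B) ∧
    (∀ B ∈ MredMat p G (a + 1) b (a + b + 2),
      {A ∈ MredMat p G a b (a + b + 2) |
        1 + (p : ZMod (p ^ (a + b + 2))) • (A - 1) = B}.ncard = p ^ 2) ∧
    (MredMat p G a b (a + b + 2)).ncard = p ^ 2 * (MredMat p G (a + 1) b (a + b + 2)).ncard := by
  classical
  have hiffa := fun A => Phi19.mem_MredMat_iff c d C G hC hGC n₀ hn₀ hG a b (a + b + 2) ha A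
  have hiffa1 := fun A => Phi19.mem_MredMat_iff c d C G hC hGC n₀ hn₀ hG (a + 1) b (a + b + 2)
    (by omega) A
  -- Part 1
  have part1 : ∀ A ∈ MredMat p G a b (a + b + 2),
      1 + (p : ZMod (p ^ (a + b + 2))) • (A - 1) ∈ MredMat p G (a + 1) b (a + b + 2) := by
    intro A hA
    obtain ⟨e, y, hPP, rfl⟩ := (hiffa A).mp hA
    rw [Phi19.phi_cm]
    exact (hiffa1 _).mpr ⟨_, _, Phi19.PP_scale hPP, rfl⟩
  -- Part 2
  have part2 : ∀ B ∈ MredMat p G (a + 1) b (a + b + 2), ∃ A ∈ MredMat p G a b (a + b + 2),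
      1 + (p : ZMod (p ^ (a + b + 2))) • (A - 1) = B := by
    intro B hB
    obtain ⟨e', y', hPP', rfl⟩ := (hiffa1 B).mp hB
    obtain ⟨e, y, rfl, rfl, hPP⟩ := Phi19.PP_unscale hPP'
    exact ⟨_, (hiffa _).mpr ⟨e, y, hPP, rfl⟩, by rw [Phi19.phi_cm]⟩
  -- Part 3
  have part3 : ∀ B ∈ MredMat p G (a + 1) b (a + b + 2),
      {A ∈ MredMat p G a b (a + b + 2) |
        1 + (p : ZMod (p ^ (a + b + 2))) • (A - 1) = B}.ncard = p ^ 2 := by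
    intro B hB
    obtain ⟨e', y', hPP', rfl⟩ := (hiffa1 B).mp hB
    obtain ⟨e, y, rfl, rfl, hPP⟩ := Phi19.PP_unscale hPP'
    set α : ℤ_[p] := (p : ℤ_[p]) ^ (a + b + 1) with hα
    set f : Fin p × Fin p → Matrix (Fin 2) (Fin 2) (ZMod (p ^ (a + b + 2))) := fun uv =>
      (Phi19.cm c d (e + α * ((uv.1 : ℕ) : ℤ_[p])) (y + α * ((uv.2 : ℕ) : ℤ_[p]))).map
        (PadicInt.toZModPow (a + b + 2)) with hf
    have hcong : ∀ z w u : ℤ_[p], (p : ℤ_[p]) ∣ w - u →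
        PadicInt.toZModPow (a + b + 2) (z + α * w) =
          PadicInt.toZModPow (a + b + 2) (z + α * u) := by
      intro z w u hdw
      rw [Phi19.toZModPow_eq_iff]
      obtain ⟨t, ht⟩ := hdw
      have : z + α * w - (z + α * u) = (p : ℤ_[p]) ^ (a + b + 2) * t := by
        rw [hα]
        have : w - u = (p : ℤ_[p]) * t := ht
        calc z + (p : ℤ_[p]) ^ (a + b + 1) * w - (z + (p : ℤ_[p]) ^ (a + b + 1) * u)
            = (p : ℤ_[p]) ^ (a + b + 1) * (w - u) := by ring
          _ = (p : ℤ_[p]) ^ (a + b + 1) * ((p : ℤ_[p]) * t) := by rw [this]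
          _ = (p : ℤ_[p]) ^ (a + b + 2) * t := by ring
      rw [this]
      exact dvd_mul_right _ _
    have hinj : Function.Injective f := by
      rintro ⟨u, v⟩ ⟨u', v'⟩ huv
      obtain ⟨hde, hdy⟩ := Phi19.cm_map_inj_entries huv
      have hde' : (p : ℤ_[p]) ^ (a + b + 2) ∣ α * (((u : ℕ) : ℤ_[p]) - ((u' : ℕ) : ℤ_[p])) := by
        have : e + α * ((u : ℕ) : ℤ_[p]) - (e + α * ((u' : ℕ) : ℤ_[p]))
            = α * (((u : ℕ) : ℤ_[p]) - ((u' : ℕ) : ℤ_[p])) := by ring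
        rwa [this] at hde
      have hdy' : (p : ℤ_[p]) ^ (a + b + 2) ∣ α * (((v : ℕ) : ℤ_[p]) - ((v' : ℕ) : ℤ_[p])) := by
        have : y + α * ((v : ℕ) : ℤ_[p]) - (y + α * ((v' : ℕ) : ℤ_[p]))
            = α * (((v : ℕ) : ℤ_[p]) - ((v' : ℕ) : ℤ_[p])) := by ring
        rwa [this] at hdy
      have key : ∀ x : ℤ_[p], (p : ℤ_[p]) ^ (a + b + 2) ∣ α * x → (p : ℤ_[p]) ∣ x := by
        intro x hx
        rw [hα, mul_comm] at hx
        have h2 : (p : ℤ_[p]) ^ (1 + (a + b + 1)) ∣ x * (p : ℤ_[p]) ^ (a + b + 1) := by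
          rwa [show 1 + (a + b + 1) = a + b + 2 by omega]
        rw [mul_comm] at h2
        have := (Phi19.pow_mul_dvd_iff 1 (a + b + 1) x).mp h2
        simpa using this
      exact Prod.ext (Phi19.dig_inj (key _ hde')) (Phi19.dig_inj (key _ hdy'))
    have hset : {A ∈ MredMat p G a b (a + b + 2) |
        1 + (p : ZMod (p ^ (a + b + 2))) • (A - 1) =
          (Phi19.cm c d ((p : ℤ_[p]) * e) ((p : ℤ_[p]) * y)).map
            (PadicInt.toZModPow (a + b + 2))} = Set.range f := by
      ext A
      constructor
      · rintro ⟨hA, hφ⟩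
        obtain ⟨e₁, y₁, hPP₁, rfl⟩ := (hiffa _).mp hA
        rw [Phi19.phi_cm] at hφ
        obtain ⟨hde, hdy⟩ := Phi19.cm_map_inj_entries hφ
        have hde' : (p : ℤ_[p]) ^ (a + b + 1) ∣ e₁ - e := by
          have h2 : (p : ℤ_[p]) ^ (a + b + 1 + 1) ∣ (p : ℤ_[p]) * (e₁ - e) := by
            rw [show a + b + 1 + 1 = a + b + 2 by omega]
            have : (p : ℤ_[p]) * e₁ - (p : ℤ_[p]) * e = (p : ℤ_[p]) * (e₁ - e) := by ring
            rwa [this] at hde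
          exact (Phi19.pdvd _ _).mp h2
        have hdy' : (p : ℤ_[p]) ^ (a + b + 1) ∣ y₁ - y := by
          have h2 : (p : ℤ_[p]) ^ (a + b + 1 + 1) ∣ (p : ℤ_[p]) * (y₁ - y) := by
            rw [show a + b + 1 + 1 = a + b + 2 by omega]
            have : (p : ℤ_[p]) * y₁ - (p : ℤ_[p]) * y = (p : ℤ_[p]) * (y₁ - y) := by ring
            rwa [this] at hdy
          exact (Phi19.pdvd _ _).mp h2
        obtain ⟨w, hw⟩ := hde'
        obtain ⟨w', hw'⟩ := hdy'
        have he₁ : e₁ = e + α * w := by rw [hα, ← hw]; ring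
        have hy₁ : y₁ = y + α * w' := by rw [hα, ← hw']; ring
        obtain ⟨u, hu⟩ := Phi19.exists_dig (p := p) w
        obtain ⟨v, hv⟩ := Phi19.exists_dig (p := p) w'
        refine ⟨(u, v), ?_⟩
        rw [hf]
        exact (Phi19.cm_map_congr
          (by rw [he₁]; exact hcong e w _ hu)
          (by rw [hy₁]; exact hcong y w' _ hv)).symm
      · rintro ⟨⟨u, v⟩, rfl⟩
        constructor
        · exact (hiffa _).mpr ⟨_, _, Phi19.PP_pert hPP _ _, rfl⟩
        · rw [hf]
          dsimp only
          rw [Phi19.phi_cm]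
          apply Phi19.cm_map_congr
          · rw [Phi19.toZModPow_eq_iff]
            rw [show (p : ℤ_[p]) * (e + α * ((u : ℕ) : ℤ_[p])) - (p : ℤ_[p]) * e
                = (p : ℤ_[p]) ^ (a + b + 2) * ((u : ℕ) : ℤ_[p]) by rw [hα]; ring]
            exact dvd_mul_right _ _
          · rw [Phi19.toZModPow_eq_iff]
            rw [show (p : ℤ_[p]) * (y + α * ((v : ℕ) : ℤ_[p])) - (p : ℤ_[p]) * y
                = (p : ℤ_[p]) ^ (a + b + 2) * ((v : ℕ) : ℤ_[p]) by rw [hα]; ring]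
            exact dvd_mul_right _ _
    rw [hset, ← Set.image_univ, Set.ncard_image_of_injective _ hinj, Set.ncard_univ,
      Nat.card_prod, Nat.card_eq_fintype_card, Fintype.card_fin, pow_two]
  -- Part 4
  refine ⟨part1, part2, part3, ?_⟩
  haveI : NeZero (p ^ (a + b + 2)) := ⟨pow_ne_zero _ (Fact.out : p.Prime).ne_zero⟩
  have hSfin : (MredMat p G a b (a + b + 2)).Finite := Set.toFinite _
  have hTfin : (MredMat p G (a + 1) b (a + b + 2)).Finite := Set.toFinite _
  have hmap : ∀ A ∈ hSfin.toFinset,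
      (1 + (p : ZMod (p ^ (a + b + 2))) • (A - 1)) ∈ hTfin.toFinset := by
    intro A hA
    rw [Set.Finite.mem_toFinset] at hA ⊢
    exact part1 A hA
  have hcard := Finset.card_eq_sum_card_fiberwise hmap
  have hfib : ∀ B ∈ hTfin.toFinset,
      (hSfin.toFinset.filter
        (fun A => 1 + (p : ZMod (p ^ (a + b + 2))) • (A - 1) = B)).card = p ^ 2 := by
    intro B hB
    rw [Set.Finite.mem_toFinset] at hB
    have h3 := part3 B hB
    rw [← h3, ← Set.ncard_coe_finset]
    congr 1
    ext A
    simp only [Finset.coe_filter, Set.Finite.mem_toFinset, Set.mem_setOf_eq]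
  rw [Set.ncard_eq_toFinset_card _ hSfin, Set.ncard_eq_toFinset_card _ hTfin, hcard]
  rw [Finset.sum_congr rfl hfib, Finset.sum_const, smul_eq_mul, mul_comm]
end
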